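/- Let (∂ : M →* L) and (∂' : M' →* L) be crossed modules of groups over the same group L and suppose f : M →* M' and g : M' →* M are morphisms of L-crossed modules with f ∘ g = id (a split short exact sequence of L-crossed modules with kernel K := ker f). Then the intersection of the displacement subgroup of M with ker f equals the subgroup generated by the displacements of elements of ker f: (Subgroup.closure {x : M | ∃ l m, x = (l • m) * m⁻¹}) ⊓ MonoidHom.ker f = Subgroup.closure {x : M | ∃ (l : L), ∃ k ∈ MonoidHom.ker f, x = (l • k) * k⁻¹}. -/

import Mathlib

/-!
Because of the Peiffer identity, `ker f` lies in the kernel of `∂` and is therefore central in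
`M`. Centrality makes `m ↦ m * (g (f m))⁻¹` a homomorphism, an `L`-equivariant retraction of `M`
onto `ker f`. It maps displacements `(l • m) * m⁻¹` to displacements `(l • k) * k⁻¹` of elements
`k` of `ker f` and fixes `ker f` pointwise, so every element of `[L, M] ∩ ker f` lies in the
subgroup generated by the latter.
-/

open Subgroup

theorem ker_le_center_of_peiffer {L M : Type*} [Group L] [Group M] [MulAction L M]
    (d : M →* L) (hpeiffer : ∀ m m' : M, d m • m' = m * m' * m⁻¹) :
    d.ker ≤ center M := by
  intro k hk
  rw [mem_center_iff]
  intro m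
  have hm : m = k * m * k⁻¹ := by rw [← hpeiffer, MonoidHom.mem_ker.mp hk, one_smul]
  rw [eq_mul_inv_iff_mul_eq] at hm
  exact hm

namespace MonoidHom

variable {M M' : Type*} [Group M] [Group M'] {f : M →* M'} {g : M' →* M}

theorem mul_inv_map_comp_mem_ker (hfg : Function.LeftInverse f g) (m : M) :
    m * (g (f m))⁻¹ ∈ f.ker := by
  rw [mem_ker, map_mul, map_inv, hfg, mul_inv_cancel]

def kerRetraction (hfg : Function.LeftInverse f g) (hcentral : f.ker ≤ center M) : M →* M where
  toFun m := m * (g (f m))⁻¹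
  map_one' := by simp
  map_mul' m n := by
    have hn := mem_center_iff.mp (hcentral (mul_inv_map_comp_mem_ker hfg n)) (g (f m))⁻¹
    simp only [map_mul, mul_inv_rev, mul_assoc]
    rw [← mul_assoc n, ← hn]

variable (hfg : Function.LeftInverse f g) (hcentral : f.ker ≤ center M)

theorem kerRetraction_apply (m : M) : kerRetraction hfg hcentral m = m * (g (f m))⁻¹ := rfl

theorem kerRetraction_mem_ker (m : M) : kerRetraction hfg hcentral m ∈ f.ker :=
  mul_inv_map_comp_mem_ker hfg m

theorem kerRetraction_of_mem_ker {k : M} (hk : k ∈ f.ker) : kerRetraction hfg hcentral k = k := by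
  rw [kerRetraction_apply, mem_ker.mp hk, map_one, inv_one, mul_one]

theorem kerRetraction_smul {L : Type*} [Monoid L] [MulDistribMulAction L M]
    [MulDistribMulAction L M'] (hf : ∀ (l : L) (m : M), f (l • m) = l • f m)
    (hg : ∀ (l : L) (m : M'), g (l • m) = l • g m) (l : L) (m : M) :
    kerRetraction hfg hcentral (l • m) = l • kerRetraction hfg hcentral m := by
  rw [kerRetraction_apply, kerRetraction_apply, hf, hg, smul_mul', smul_inv']

end MonoidHom

theorem map_closure_displacements_le {L M N : Type*} [Monoid L] [Group M] [Group N]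
    [MulDistribMulAction L M] [MulDistribMulAction L N] {p : M →* N}
    (hp : ∀ (l : L) (m : M), p (l • m) = l • p m) {S : Set N} (hS : ∀ m, p m ∈ S) :
    (closure {x : M | ∃ (l : L) (m : M), x = (l • m) * m⁻¹}).map p ≤
      closure {x : N | ∃ (l : L), ∃ k ∈ S, x = (l • k) * k⁻¹} := by
  rw [MonoidHom.map_closure, closure_le]
  rintro _ ⟨_, ⟨l, m, rfl⟩, rfl⟩
  exact subset_closure ⟨l, p m, hS m, by rw [map_mul, map_inv, hp]⟩

theorem smul_mem_ker {L M M' : Type*} [Monoid L] [Group M] [Group M']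
    [MulDistribMulAction L M] [MulDistribMulAction L M'] {f : M →* M'}
    (hf : ∀ (l : L) (m : M), f (l • m) = l • f m) (l : L) {k : M} (hk : k ∈ f.ker) :
    l • k ∈ f.ker := by
  rw [MonoidHom.mem_ker, hf, MonoidHom.mem_ker.mp hk, smul_one]

theorem displacement_inf_ker_eq_displacement_of_ker_general
    {L M M' : Type*} [Group L] [Group M] [Group M']
    [MulDistribMulAction L M] [MulDistribMulAction L M']
    (d : M →* L) (d' : M' →* L)
    (hpeiffer : ∀ (m m' : M), (d m) • m' = m * m' * m⁻¹)
    (f : M →* M') (g : M' →* M)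
    -- f and g are morphisms of L-crossed modules
    (hfd : ∀ m : M, d' (f m) = d m)
    (hfequiv : ∀ (l : L) (m : M), f (l • m) = l • f m)
    (hgequiv : ∀ (l : L) (m : M'), g (l • m) = l • g m)
    -- g splits f
    (hsplit : ∀ m : M', f (g m) = m) :
    (Subgroup.closure {x : M | ∃ (l : L) (m : M), x = (l • m) * m⁻¹}) ⊓
        MonoidHom.ker f
      = Subgroup.closure
          {x : M | ∃ (l : L), ∃ k ∈ MonoidHom.ker f, x = (l • k) * k⁻¹} := by
  have hker : f.ker ≤ d.ker := fun k hk => by rw [MonoidHom.mem_ker, ← hfd, hk, map_one]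
  have hcentral : f.ker ≤ center M := hker.trans (ker_le_center_of_peiffer d hpeiffer)
  apply le_antisymm
  · rintro x ⟨hx, hxker⟩
    rw [← MonoidHom.kerRetraction_of_mem_ker hsplit hcentral hxker]
    exact map_closure_displacements_le (MonoidHom.kerRetraction_smul hsplit hcentral hfequiv hgequiv)
      (MonoidHom.kerRetraction_mem_ker hsplit hcentral) (mem_map_of_mem _ hx)
  · rw [closure_le]
    rintro _ ⟨l, k, hk, rfl⟩
    exact mem_inf.mpr ⟨subset_closure ⟨l, k, rfl⟩, mul_mem (smul_mem_ker hfequiv l hk) (inv_mem hk)⟩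

/-- For a split short exact sequence of `L`-crossed modules of
groups with kernel `K = ker f`, the intersection of the displacement subgroup of
`M` with `ker f` is the subgroup generated by the displacements of elements of
`ker f` (protoadditivity of the displacement commutator). -/
theorem displacement_inf_ker_eq_displacement_of_ker
    {L M M' : Type*} [Group L] [Group M] [Group M']
    [MulDistribMulAction L M] [MulDistribMulAction L M']
    (d : M →* L) (d' : M' →* L)
    (hequiv : ∀ (l : L) (m : M), d (l • m) = l * d m * l⁻¹)
    (hpeiffer : ∀ (m m' : M), (d m) • m' = m * m' * m⁻¹)
    (hequiv' : ∀ (l : L) (m : M'), d' (l • m) = l * d' m * l⁻¹)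
    (hpeiffer' : ∀ (m m' : M'), (d' m) • m' = m * m' * m⁻¹)
    (f : M →* M') (g : M' →* M)
    -- f and g are morphisms of L-crossed modules
    (hfd : ∀ m : M, d' (f m) = d m)
    (hfequiv : ∀ (l : L) (m : M), f (l • m) = l • f m)
    (hgd : ∀ m : M', d (g m) = d' m)
    (hgequiv : ∀ (l : L) (m : M'), g (l • m) = l • g m)
    -- g splits f
    (hsplit : ∀ m : M', f (g m) = m) :
    (Subgroup.closure {x : M | ∃ (l : L) (m : M), x = (l • m) * m⁻¹}) ⊓
        MonoidHom.ker f
      = Subgroup.closure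
          {x : M | ∃ (l : L), ∃ k ∈ MonoidHom.ker f, x = (l • k) * k⁻¹} :=
  displacement_inf_ker_eq_displacement_of_ker_general d d' hpeiffer f g hfd hfequiv hgequiv hsplit
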